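/- arXiv:2105.09592 — 4 statements merged into one kernel-verified Lean document; each statement's English description precedes it below -/
import Mathlib

section
/- Let $f : \mathbb{R} \to \mathbb{R}$ be continuous and nonnegative, let $a < d$ and $c_1 < c_2$ be reals, and define $D(b) = \int_a^b (x - c_1)^2 f(x)\,dx + \int_b^d (x - c_2)^2 f(x)\,dx$ for $b \in (a, d)$. Then $D$ is differentiable on $(a,d)$ with $D'(b) = f(b)\big((b - c_1)^2 - (b - c_2)^2\big)$; consequently, at any point $b \in (a,d)$ with $f(b) > 0$, $D'(b) = 0$ if and only if $b = (c_1 + c_2)/2$. -/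
open MeasureTheory intervalIntegral

theorem hasDerivAt_integral_add_integral {E : Type*} [NormedAddCommGroup E] [NormedSpace ℝ E]
    [CompleteSpace E] {g₁ g₂ : ℝ → E} (hg₁ : Continuous g₁) (hg₂ : Continuous g₂)
    (a d b : ℝ) :
    HasDerivAt (fun t => (∫ x in a..t, g₁ x) + ∫ x in t..d, g₂ x) (g₁ b - g₂ b) b := by
  have hleft := (hg₁.integral_hasStrictDerivAt a b).hasDerivAt
  have hright := integral_hasDerivAt_left (hg₂.intervalIntegrable b d)
    (hg₂.stronglyMeasurableAtFilter _ _) hg₂.continuousAt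
  exact sub_eq_add_neg (g₁ b) (g₂ b) ▸ hleft.fun_add hright

theorem sq_sub_sub_sq_sub_eq_zero_iff {K : Type*} [Field K] [NeZero (2 : K)] {c₁ c₂ : K}
    (hc : c₁ ≠ c₂) (b : K) :
    (b - c₁) ^ 2 - (b - c₂) ^ 2 = 0 ↔ b = (c₁ + c₂) / 2 := by
  have hfactor : (b - c₁) ^ 2 - (b - c₂) ^ 2 = (c₂ - c₁) * (2 * b - (c₁ + c₂)) := by ring
  rw [hfactor, mul_eq_zero, sub_eq_zero, sub_eq_zero, eq_div_iff two_ne_zero, mul_comm]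
  exact or_iff_right (Ne.symm hc)

theorem lloyd_max_boundary_criterion_general
    (f : ℝ → ℝ) (hf : Continuous f)
    (a d c₁ c₂ : ℝ) (hc : c₁ < c₂)
    (D : ℝ → ℝ)
    (hD : ∀ b, D b = (∫ x in a..b, (x - c₁) ^ 2 * f x) +
      ∫ x in b..d, (x - c₂) ^ 2 * f x) :
    ∀ b ∈ Set.Ioo a d,
      HasDerivAt D (f b * ((b - c₁) ^ 2 - (b - c₂) ^ 2)) b ∧
      (0 < f b →
        (f b * ((b - c₁) ^ 2 - (b - c₂) ^ 2) = 0 ↔ b = (c₁ + c₂) / 2)) := by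
  intro b _
  refine ⟨?_, fun hfb => ?_⟩
  · rw [show D = _ from funext hD]
    exact (hasDerivAt_integral_add_integral (by fun_prop) (by fun_prop) a d b).congr_deriv
      (by ring)
  · rw [mul_eq_zero, or_iff_right hfb.ne']
    exact sq_sub_sub_sq_sub_eq_zero_iff hc.ne b

/-- Lloyd–Max boundary criterion: the distortion
`D(b) = ∫_a^b (x-c₁)² f + ∫_b^d (x-c₂)² f` of two adjacent cells is
differentiable on `(a,d)` with `D'(b) = f(b)((b-c₁)² - (b-c₂)²)`, and at any
`b` with `f(b) > 0` the derivative vanishes iff `b` is the midpoint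
`(c₁+c₂)/2`. -/
theorem lloyd_max_boundary_criterion
    (f : ℝ → ℝ) (hf : Continuous f) (hf0 : ∀ x, 0 ≤ f x)
    (a d c₁ c₂ : ℝ) (had : a < d) (hc : c₁ < c₂)
    (D : ℝ → ℝ)
    (hD : ∀ b, D b = (∫ x in a..b, (x - c₁) ^ 2 * f x) +
      ∫ x in b..d, (x - c₂) ^ 2 * f x) :
    ∀ b ∈ Set.Ioo a d,
      HasDerivAt D (f b * ((b - c₁) ^ 2 - (b - c₂) ^ 2)) b ∧
      (0 < f b →
        (f b * ((b - c₁) ^ 2 - (b - c₂) ^ 2) = 0 ↔ b = (c₁ + c₂) / 2)) :=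
  lloyd_max_boundary_criterion_general f hf a d c₁ c₂ hc D hD
end

section
/- Let $k : \mathbb{R} \to \mathbb{R}$ be differentiable and set $g = -k'$. Fix samples $x_1, \dots, x_N \in \mathbb{R}$, a bandwidth $h > 0$, and a constant $z_k > 0$, and define the kernel density estimate $\hat f(x) = \frac{z_k}{N h} \sum_{i=1}^N k\big(((x - x_i)/h)^2\big)$. Then $\hat f$ is differentiable and, for every $x$, $\hat f'(x) = \frac{2 z_k}{N h^3} \sum_{i=1}^N (x_i - x)\, g\big(((x_i - x)/h)^2\big)$; moreover, if $S(x) = \sum_{i=1}^N g\big(((x_i - x)/h)^2\big) \ne 0$, then $\hat f'(x) = \frac{2 z_k}{N h^3}\, S(x)\, m(x)$, where $m(x) = \frac{\sum_{i=1}^N x_i\, g(((x_i - x)/h)^2)}{\sum_{i=1}^N g(((x_i - x)/h)^2)} - x$ is the mean-shift vector. -/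
open scoped BigOperators

theorem hasDerivAt_comp_sq_sub_div {k : ℝ → ℝ} (c h y : ℝ)
    (hk : DifferentiableAt ℝ k (((y - c) / h) ^ 2)) :
    HasDerivAt (fun y => k (((y - c) / h) ^ 2))
      (2 / h ^ 2 * ((c - y) * -deriv k (((c - y) / h) ^ 2))) y := by
  have hinner : HasDerivAt (fun y => ((y - c) / h) ^ 2) (2 * ((y - c) / h) * h⁻¹) y := by
    simpa using (((hasDerivAt_id y).sub_const c).div_const h).fun_pow 2
  have hsymm : ((c - y) / h) ^ 2 = ((y - c) / h) ^ 2 := by ring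
  rw [hsymm]
  exact (hk.hasDerivAt.comp y hinner).congr_deriv (by ring)

theorem hasDerivAt_sum_comp_sq_sub_div {ι : Type*} {k : ℝ → ℝ} (hk : Differentiable ℝ k)
    (s : Finset ι) (x : ι → ℝ) (h y : ℝ) :
    HasDerivAt (fun y => ∑ i ∈ s, k (((y - x i) / h) ^ 2))
      (2 / h ^ 2 * ∑ i ∈ s, (x i - y) * -deriv k (((x i - y) / h) ^ 2)) y := by
  rw [Finset.mul_sum]
  exact HasDerivAt.fun_sum fun i _ => hasDerivAt_comp_sq_sub_div (x i) h y (hk _)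

theorem Finset.sum_sub_mul_eq_sum_mul_div_sub {ι K : Type*} [Field K] (s : Finset ι)
    (a w : ι → K) (y : K)
    (hw : ∑ i ∈ s, w i ≠ 0) :
    ∑ i ∈ s, (a i - y) * w i = (∑ i ∈ s, w i) * ((∑ i ∈ s, a i * w i) / ∑ i ∈ s, w i - y) := by
  rw [mul_sub, mul_div_cancel₀ _ hw, Finset.sum_mul, ← Finset.sum_sub_distrib]
  exact Finset.sum_congr rfl fun i _ => by ring

theorem kde_gradient_mean_shift_general
    (k : ℝ → ℝ) (hk : Differentiable ℝ k)
    (g : ℝ → ℝ) (hg : ∀ t, g t = -deriv k t)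
    (N : ℕ) (x : Fin N → ℝ)
    (h z_k : ℝ)
    (fhat : ℝ → ℝ)
    (hfhat : ∀ y, fhat y = z_k / (N * h) * ∑ i, k (((y - x i) / h) ^ 2)) :
    ∀ y : ℝ,
      HasDerivAt fhat
        (2 * z_k / (N * h ^ 3) * ∑ i, (x i - y) * g (((x i - y) / h) ^ 2)) y ∧
      ((∑ i, g (((x i - y) / h) ^ 2)) ≠ 0 →
        deriv fhat y =
          2 * z_k / (N * h ^ 3) * (∑ i, g (((x i - y) / h) ^ 2)) *
            ((∑ i, x i * g (((x i - y) / h) ^ 2)) /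
              (∑ i, g (((x i - y) / h) ^ 2)) - y)) := by
  intro y
  have hderiv : HasDerivAt fhat
      (2 * z_k / (N * h ^ 3) * ∑ i, (x i - y) * g (((x i - y) / h) ^ 2)) y := by
    rw [funext hfhat]
    refine ((hasDerivAt_sum_comp_sq_sub_div hk Finset.univ x h y).const_mul
      (z_k / (N * h))).congr_deriv ?_
    simp only [hg]
    ring
  refine ⟨hderiv, fun hS => ?_⟩
  rw [hderiv.deriv, mul_assoc, Finset.sum_sub_mul_eq_sum_mul_div_sub _ _ _ _ hS]

/-- Gradient of the kernel density estimate and the mean-shift vector: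
with profile `k`, `g = -k'`, and
`f̂(x) = z_k/(Nh) ∑ᵢ k(((x - xᵢ)/h)²)`, one has
`f̂'(x) = (2 z_k/(N h³)) ∑ᵢ (xᵢ - x) g(((xᵢ - x)/h)²)`, and whenever
`S(x) = ∑ᵢ g(((xᵢ - x)/h)²) ≠ 0`,
`f̂'(x) = (2 z_k/(N h³)) S(x) m(x)` with mean-shift vector
`m(x) = (∑ᵢ xᵢ g(((xᵢ - x)/h)²))/S(x) - x`. -/
theorem kde_gradient_mean_shift
    (k : ℝ → ℝ) (hk : Differentiable ℝ k)
    (g : ℝ → ℝ) (hg : ∀ t, g t = -deriv k t)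
    (N : ℕ) (hN : 0 < N) (x : Fin N → ℝ)
    (h z_k : ℝ) (hh : 0 < h) (hz : 0 < z_k)
    (fhat : ℝ → ℝ)
    (hfhat : ∀ y, fhat y = z_k / (N * h) * ∑ i, k (((y - x i) / h) ^ 2)) :
    ∀ y : ℝ,
      HasDerivAt fhat
        (2 * z_k / (N * h ^ 3) * ∑ i, (x i - y) * g (((x i - y) / h) ^ 2)) y ∧
      ((∑ i, g (((x i - y) / h) ^ 2)) ≠ 0 →
        deriv fhat y =
          2 * z_k / (N * h ^ 3) * (∑ i, g (((x i - y) / h) ^ 2)) *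
            ((∑ i, x i * g (((x i - y) / h) ^ 2)) /
              (∑ i, g (((x i - y) / h) ^ 2)) - y)) :=
  kde_gradient_mean_shift_general k hk g hg N x h z_k fhat hfhat
end

section
/- Let $k : \mathbb{R} \to \mathbb{R}$ be differentiable, $g = -k'$, and let $x_1, \dots, x_N \in \mathbb{R}$, $h > 0$, $z_k > 0$, $z_g > 0$. Define $\hat f_K(x) = \frac{z_k}{Nh} \sum_{i=1}^N k\big(((x - x_i)/h)^2\big)$, $\hat f_G(x) = \frac{z_g}{Nh} \sum_{i=1}^N g\big(((x - x_i)/h)^2\big)$, and, whenever $\sum_i g(((x_i - x)/h)^2) \ne 0$, the mean-shift vector $m(x) = \frac{\sum_i x_i g(((x_i - x)/h)^2)}{\sum_i g(((x_i - x)/h)^2)} - x$. Then for every such $x$, $m(x)\, \hat f_G(x) = \frac{z_g h^2}{2 z_k}\, \hat f_K'(x)$; in particular the mean-shift vector points in the direction of the gradient of $\hat f_K$ wherever $\hat f_G(x) > 0$. -/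
/-! By the chain rule and `g = -k'`, `∂ᵧ k(((y - xᵢ)/h)²) = (2/h²)(xᵢ - y) g(((xᵢ - y)/h)²)`, so
`f̂_K'(y)` is a constant multiple of `∑ᵢ (xᵢ - y) gᵢ = m(y) ∑ᵢ gᵢ`, and `∑ᵢ gᵢ` is a constant
multiple of `f̂_G(y)`. -/

theorem hasDerivAt_comp_sq_div_sub {k : ℝ → ℝ} {a h y : ℝ}
    (hk : DifferentiableAt ℝ k (((y - a) / h) ^ 2)) :
    HasDerivAt (fun y => k (((y - a) / h) ^ 2))
      (2 / h ^ 2 * ((y - a) * deriv k (((y - a) / h) ^ 2))) y := by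
  have hinner : HasDerivAt (fun y => ((y - a) / h) ^ 2) (2 * ((y - a) / h) * (1 / h)) y := by
    simpa using (((hasDerivAt_id y).sub_const a).div_const h).fun_pow 2
  exact (hk.hasDerivAt.comp y hinner).congr_deriv (by ring)

theorem hasDerivAt_sum_comp_sq_div_sub_of_shadow {ι : Type*} [Fintype ι]
    {k g : ℝ → ℝ} (hk : Differentiable ℝ k) (hg : ∀ t, g t = -deriv k t)
    (x : ι → ℝ) (h y : ℝ) :
    HasDerivAt (fun y => ∑ i, k (((y - x i) / h) ^ 2))
      (2 / h ^ 2 * ∑ i, (x i - y) * g (((x i - y) / h) ^ 2)) y := by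
  have hsq : ∀ i, ((x i - y) / h) ^ 2 = ((y - x i) / h) ^ 2 := fun i => by ring
  simp only [hsq, hg, Finset.mul_sum]
  refine HasDerivAt.fun_sum fun i _ => ?_
  exact (hasDerivAt_comp_sq_div_sub (hk _)).congr_deriv (by ring)

theorem sum_sub_mul_eq_div_sum_sub_mul {ι : Type*} [Fintype ι] (x w : ι → ℝ) (y : ℝ)
    (hw : ∑ i, w i ≠ 0) :
    ∑ i, (x i - y) * w i = ((∑ i, x i * w i) / (∑ i, w i) - y) * ∑ i, w i := by
  rw [sub_mul, div_mul_cancel₀ _ hw, Finset.mul_sum, ← Finset.sum_sub_distrib]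
  simp only [sub_mul]

theorem mean_shift_is_scaled_gradient_general
    (k : ℝ → ℝ) (hk : Differentiable ℝ k)
    (g : ℝ → ℝ) (hg : ∀ t, g t = -deriv k t)
    (N : ℕ) (x : Fin N → ℝ)
    (h z_k z_g : ℝ) (hh : 0 < h) (hzk : 0 < z_k) (hzg : 0 < z_g)
    (fK fG : ℝ → ℝ)
    (hfK : ∀ y, fK y = z_k / (N * h) * ∑ i, k (((y - x i) / h) ^ 2))
    (hfG : ∀ y, fG y = z_g / (N * h) * ∑ i, g (((y - x i) / h) ^ 2))
    (m : ℝ → ℝ)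
    (hm : ∀ y, m y = (∑ i, x i * g (((x i - y) / h) ^ 2)) /
      (∑ i, g (((x i - y) / h) ^ 2)) - y) :
    ∀ y : ℝ, (∑ i, g (((x i - y) / h) ^ 2)) ≠ 0 →
      m y * fG y = z_g * h ^ 2 / (2 * z_k) * deriv fK y ∧
      (0 < fG y → (0 < m y ↔ 0 < deriv fK y)) := by
  intro y hS
  have hderiv : deriv fK y
      = z_k / (N * h) * (2 / h ^ 2 * (m y * ∑ i, g (((x i - y) / h) ^ 2))) := by
    rw [funext hfK, hm, ← sum_sub_mul_eq_div_sum_sub_mul _ _ _ hS]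
    exact ((hasDerivAt_sum_comp_sq_div_sub_of_shadow hk hg x h y).const_mul _).deriv
  have hfGy : fG y = z_g / (N * h) * ∑ i, g (((x i - y) / h) ^ 2) := by
    simp only [hfG, fun i => show ((y - x i) / h) ^ 2 = ((x i - y) / h) ^ 2 by ring]
  have hscaled : m y * fG y = z_g * h ^ 2 / (2 * z_k) * deriv fK y := by
    rw [hderiv, hfGy]
    field_simp
  refine ⟨hscaled, fun hfG_pos => ?_⟩
  have hc : 0 < z_g * h ^ 2 / (2 * z_k) := by positivity
  rw [← mul_pos_iff_of_pos_right hfG_pos, hscaled, mul_pos_iff_of_pos_left hc]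

/-- The mean-shift vector is a rescaled gradient of the shadow-kernel density
estimate: with `g = -k'`,
`f̂_K(x) = z_k/(Nh) ∑ᵢ k(((x-xᵢ)/h)²)`, `f̂_G(x) = z_g/(Nh) ∑ᵢ g(((x-xᵢ)/h)²)`,
and mean-shift vector `m(x)`, one has `m(x) f̂_G(x) = (z_g h²/(2 z_k)) f̂_K'(x)`
whenever `∑ᵢ g(((xᵢ-x)/h)²) ≠ 0`; in particular `m` has the sign of the
gradient of `f̂_K` wherever `f̂_G > 0`. -/
theorem mean_shift_is_scaled_gradient
    (k : ℝ → ℝ) (hk : Differentiable ℝ k)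
    (g : ℝ → ℝ) (hg : ∀ t, g t = -deriv k t)
    (N : ℕ) (hN : 0 < N) (x : Fin N → ℝ)
    (h z_k z_g : ℝ) (hh : 0 < h) (hzk : 0 < z_k) (hzg : 0 < z_g)
    (fK fG : ℝ → ℝ)
    (hfK : ∀ y, fK y = z_k / (N * h) * ∑ i, k (((y - x i) / h) ^ 2))
    (hfG : ∀ y, fG y = z_g / (N * h) * ∑ i, g (((y - x i) / h) ^ 2))
    (m : ℝ → ℝ)
    (hm : ∀ y, m y = (∑ i, x i * g (((x i - y) / h) ^ 2)) /
      (∑ i, g (((x i - y) / h) ^ 2)) - y) :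
    ∀ y : ℝ, (∑ i, g (((x i - y) / h) ^ 2)) ≠ 0 →
      m y * fG y = z_g * h ^ 2 / (2 * z_k) * deriv fK y ∧
      (0 < fG y → (0 < m y ↔ 0 < deriv fK y)) :=
  mean_shift_is_scaled_gradient_general k hk g hg N x h z_k z_g hh hzk hzg fK fG hfK hfG m hm
end

section
/- Let $N = mM$ with $m, M \ge 1$, and let $u, s \in \mathbb{R}^N$. For $i = 1, \dots, M$ let $\bar u_i = \frac{1}{m}\sum_{j = m(i-1)+1}^{mi} u_j$ and $\bar s_i = \frac{1}{m}\sum_{j = m(i-1)+1}^{mi} s_j$ be the segment averages. Then $m \sum_{i=1}^M (\bar u_i - \bar s_i)^2 \le \sum_{j=1}^N (u_j - s_j)^2$; equivalently, the PAA distance $\sqrt{\frac{N}{M} \sum_{i=1}^M (\bar u_i - \bar s_i)^2}$ lower-bounds the Euclidean distance $\|u - s\|_2$. -/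
open Finset

theorem Finset.sum_range_mul_eq_sum_blocks {β : Type*} [AddCommMonoid β] (f : ℕ → β) (m M : ℕ) :
    ∑ j ∈ range (m * M), f j = ∑ i ∈ range M, ∑ j ∈ range m, f (m * i + j) := by
  induction M with
  | zero => simp
  | succ M ih => rw [Nat.mul_succ, sum_range_add, ih, sum_range_succ]

theorem Finset.card_mul_sq_mean_le_sum_sq {ι α : Type*} [Field α] [LinearOrder α]
    [IsStrictOrderedRing α] (s : Finset ι) (f : ι → α) :
    (#s : α) * (1 / #s * ∑ i ∈ s, f i) ^ 2 ≤ ∑ i ∈ s, f i ^ 2 := by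
  rcases eq_or_ne (#s : α) 0 with hs | hs
  · simpa [hs] using sum_nonneg fun i _ => sq_nonneg (f i)
  · calc (#s : α) * (1 / #s * ∑ i ∈ s, f i) ^ 2 = (∑ i ∈ s, f i) ^ 2 / #s := by field_simp
      _ ≤ ∑ i ∈ s, f i ^ 2 := by
        rw [div_le_iff₀ (by positivity)]
        exact sq_sum_le_card_mul_sum_sq.trans_eq (mul_comm _ _)

theorem paa_lower_bounds_euclidean_general
    (m M : ℕ)
    (u s : ℕ → ℝ)
    (ubar sbar : ℕ → ℝ)
    (hubar : ∀ i, ubar i = (1 / (m : ℝ)) * ∑ j ∈ Finset.range m, u (m * i + j))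
    (hsbar : ∀ i, sbar i = (1 / (m : ℝ)) * ∑ j ∈ Finset.range m, s (m * i + j)) :
    (m : ℝ) * ∑ i ∈ Finset.range M, (ubar i - sbar i) ^ 2 ≤
      ∑ j ∈ Finset.range (m * M), (u j - s j) ^ 2 ∧
    Real.sqrt (((m * M : ℕ) : ℝ) / (M : ℝ) *
        ∑ i ∈ Finset.range M, (ubar i - sbar i) ^ 2) ≤
      Real.sqrt (∑ j ∈ Finset.range (m * M), (u j - s j) ^ 2) := by
  have hmean_sub (i : ℕ) :
      ubar i - sbar i = 1 / (m : ℝ) * ∑ j ∈ range m, (u (m * i + j) - s (m * i + j)) := by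
    rw [hubar, hsbar, sum_sub_distrib, mul_sub]
  have hsegments : (m : ℝ) * ∑ i ∈ range M, (ubar i - sbar i) ^ 2 ≤
      ∑ j ∈ range (m * M), (u j - s j) ^ 2 := by
    rw [sum_range_mul_eq_sum_blocks, mul_sum]
    gcongr with i
    simpa [hmean_sub] using
      card_mul_sq_mean_le_sum_sq (range m) fun j => u (m * i + j) - s (m * i + j)
  have hNM : ((m * M : ℕ) : ℝ) / M ≤ m := by
    rw [Nat.cast_mul, mul_div_assoc]
    exact mul_le_of_le_one_right m.cast_nonneg (div_self_le_one _)
  refine ⟨hsegments, Real.sqrt_le_sqrt (le_trans ?_ hsegments)⟩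
  gcongr

/-- The PAA distance lower-bounds the Euclidean distance: for time series
`u, s` of length `N = mM` with segment averages `ū, s̄`,
`m ∑ᵢ (ūᵢ - s̄ᵢ)² ≤ ∑ⱼ (uⱼ - sⱼ)²`, equivalently
`√((N/M) ∑ᵢ (ūᵢ - s̄ᵢ)²) ≤ ‖u - s‖₂`. -/
theorem paa_lower_bounds_euclidean
    (m M : ℕ) (hm : 1 ≤ m) (hM : 1 ≤ M)
    (u s : ℕ → ℝ)
    (ubar sbar : ℕ → ℝ)
    (hubar : ∀ i, ubar i = (1 / (m : ℝ)) * ∑ j ∈ Finset.range m, u (m * i + j))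
    (hsbar : ∀ i, sbar i = (1 / (m : ℝ)) * ∑ j ∈ Finset.range m, s (m * i + j)) :
    (m : ℝ) * ∑ i ∈ Finset.range M, (ubar i - sbar i) ^ 2 ≤
      ∑ j ∈ Finset.range (m * M), (u j - s j) ^ 2 ∧
    Real.sqrt (((m * M : ℕ) : ℝ) / (M : ℝ) *
        ∑ i ∈ Finset.range M, (ubar i - sbar i) ^ 2) ≤
      Real.sqrt (∑ j ∈ Finset.range (m * M), (u j - s j) ^ 2) :=
  paa_lower_bounds_euclidean_general m M u s ubar sbar hubar hsbar
end
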